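/- In the instance D(G,≻,ε): if x is a symmetric core-stable data exchange, then the assignment f(e) := ((1−ε)/(1+ε))·max(f⁺(e), f⁻(e)) is a fractional matching of G (i.e., f(e) ∈ [0,1] for every hyperedge e and Σ_{e∈E(v)} f(e) ≤ 1 for every vertex v) and f is (1 − 10·ε^{1/4})-stable. -/

import Mathlib

open scoped BigOperators
open Classical

namespace DataExchangeHGM

noncomputable section

/-- A data exchange on an arbitrary agent type: entries in `[0,1]`, zero diagonal. -/
def IsExch {A : Type*} (x : A → A → ℝ) : Prop :=
  (∀ a b, 0 ≤ x a b ∧ x a b ≤ 1) ∧ ∀ a, x a a = 0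

/-- An exchange over the coalition `U`: zero outside `U × U`. -/
def IsExchOver {A : Type*} (U : Set A) (x : A → A → ℝ) : Prop :=
  IsExch x ∧ ∀ a b, (a ∉ U ∨ b ∉ U) → x a b = 0

/-- Core stability with respect to a utility function `u` (taking the whole exchange). -/
def CoreStable {A : Type*} (u : (A → A → ℝ) → A → ℝ) (x : A → A → ℝ) : Prop :=
  ¬ ∃ (U : Set A) (y : A → A → ℝ), U.Nonempty ∧ IsExchOver U y ∧ ∀ a ∈ U, u x a < u y a

variable {V E : Type*}

/-- The agents of the instance `D(G,≻,ε)`: one edge agent and one intermediate agent per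
hyperedge, and one vertex agent per vertex. -/
abbrev Agent (V E : Type*) := E ⊕ (E ⊕ V)

/-- The edge agent of hyperedge `e`. -/
def edgeA (e : E) : Agent V E := Sum.inl e

/-- The intermediate agent `i_e` of hyperedge `e`. -/
def interA (e : E) : Agent V E := Sum.inr (Sum.inl e)

/-- The vertex agent of vertex `v`. -/
def vertA (v : V) : Agent V E := Sum.inr (Sum.inr v)

variable [Fintype E]

/-- `E(v)`: the hyperedges containing `v`, where `ends e : Fin 3 → V` lists the three
vertices of `e`. -/
def Ev (ends : E → Fin 3 → V) (v : V) : Finset E :=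
  Finset.univ.filter (fun e => ∃ t, ends e t = v)

/-- The weight `w_v(e)`: `d+H+1`, `d+H`, or `H` according to the rank (0 = most preferred,
1 = second, 2 = least) of `e` in `v`'s preference order. -/
def weight (d H : ℝ) (rank : V → E → Fin 3) (v : V) (e : E) : ℝ :=
  if rank v e = 0 then d + H + 1 else if rank v e = 1 then d + H else H

/-- Utility of the edge agent `e`: payoff `x_{i_e,e}` minus cost `(1-ε)·x_{e,i_e}`. -/
def uEdge (ε : ℝ) (x : Agent V E → Agent V E → ℝ) (e : E) : ℝ :=
  x (interA e) (edgeA e) - (1 - ε) * x (edgeA e) (interA e)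

/-- Utility of the intermediate agent `i_e`. -/
def uInter (ε : ℝ) (ends : E → Fin 3 → V) (x : Agent V E → Agent V E → ℝ) (e : E) : ℝ :=
  min (x (edgeA e) (interA e))
      (min (x (vertA (ends e 0)) (interA e))
        (min (x (vertA (ends e 1)) (interA e)) (x (vertA (ends e 2)) (interA e))))
    - (1 - ε) *
      max (x (interA e) (edgeA e))
        (max (x (interA e) (vertA (ends e 0)))
          (max (x (interA e) (vertA (ends e 1))) (x (interA e) (vertA (ends e 2)))))

/-- Utility of the vertex agent `v`. -/
def uVert (d H Γ : ℝ) (ends : E → Fin 3 → V) (rank : V → E → Fin 3)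
    (x : Agent V E → Agent V E → ℝ) (v : V) : ℝ :=
  (∑ e ∈ Ev ends v, weight d H rank v e * x (interA e) (vertA v))
    - Γ * max ((∑ e ∈ Ev ends v, x (vertA v) (interA e)) - 1) 0

/-- The utility function of the instance `D(G,≻,ε)`. -/
def util (ε d H Γ : ℝ) (ends : E → Fin 3 → V) (rank : V → E → Fin 3)
    (x : Agent V E → Agent V E → ℝ) : Agent V E → ℝ
  | Sum.inl e => uEdge ε x e
  | Sum.inr (Sum.inl e) => uInter ε ends x e
  | Sum.inr (Sum.inr v) => uVert d H Γ ends rank x v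

/-- A symmetric exchange: for every hyperedge `e`, all shares from `i_e` to the edge agent
and the three vertex agents agree (their common value is `f⁻(e)`), and all shares towards
`i_e` agree (their common value is `f⁺(e)`). -/
def Symm (ends : E → Fin 3 → V) (x : Agent V E → Agent V E → ℝ) : Prop :=
  ∀ e : E, (∀ t : Fin 3, x (interA e) (vertA (ends e t)) = x (interA e) (edgeA e)) ∧
    (∀ t : Fin 3, x (vertA (ends e t)) (interA e) = x (edgeA e) (interA e))

/-- `f⁻(e)`: the common outgoing share of `i_e` in a symmetric exchange. -/
def fminus (x : Agent V E → Agent V E → ℝ) (e : E) : ℝ := x (interA e) (edgeA e)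

/-- `f⁺(e)`: the common incoming share of `i_e` in a symmetric exchange. -/
def fplus (x : Agent V E → Agent V E → ℝ) (e : E) : ℝ := x (edgeA e) (interA e)

/-!
Leaving alone guarantees every agent utility `0`, so in a core-stable exchange every agent is
individually rational. For a symmetric exchange this gives `(1-ε) f⁺(e) ≤ f⁻(e)` (edge agent),
`(1-ε) f⁻(e) ≤ f⁺(e)` (intermediate agent) and, since the penalty `Γ` outweighs every possible
payoff, `Σ_{e ∈ E(v)} f⁺(e) ≤ 1 + ε` (vertex agent); together these make `f` a fractional matching.

If `f` were not stable at `e`, every vertex `v` of `e` would receive little `f⁻` from the hyperedges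
it ranks at least as high as `e`, and all the rest with weight at most the next lower one. Then `e`,
`i_e` and the vertices of `e` block: `i_e` sends `1 - ε^{3/4}` to each of them, which beats what
every vertex earns now because consecutive weights differ by `1`, `d = ε^{-1/4}` and `H = ε^{-1/2}`,
while the share `i_e` receives can be tuned to leave both `e` and `i_e` strictly better off.
-/

open Finset

theorem CoreStable.util_zero_le {A : Type*} {u : (A → A → ℝ) → A → ℝ} {x : A → A → ℝ}
    (h : CoreStable u x) (a : A) : u (fun _ _ => 0) a ≤ u x a := by
  by_contra! hlt
  refine h ⟨{a}, fun _ _ => 0, Set.singleton_nonempty a,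
    ⟨⟨fun _ _ => ⟨le_rfl, zero_le_one⟩, fun _ => rfl⟩, fun _ _ _ => rfl⟩, ?_⟩
  rintro b rfl
  exact hlt

section Instance

variable {V E : Type*} {ends : E → Fin 3 → V} {rank : V → E → Fin 3}
  {x : Agent V E → Agent V E → ℝ} {ε d H Γ : ℝ}

theorem Symm.uInter_eq (hx : Symm ends x) (e : E) :
    uInter ε ends x e = fplus x e - (1 - ε) * fminus x e := by
  simp only [uInter, (hx e).1, (hx e).2, min_self, max_self, fplus, fminus]

theorem weight_nonneg (hd : 0 ≤ d) (hH : 0 ≤ H) (v : V) (e : E) : 0 ≤ weight d H rank v e := by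
  unfold weight
  split_ifs <;> linarith

theorem weight_le (hd : 0 ≤ d) (v : V) (e : E) : weight d H rank v e ≤ d + H + 1 := by
  unfold weight
  split_ifs <;> linarith

def inducedMatching (ε : ℝ) (x : Agent V E → Agent V E → ℝ) (e : E) : ℝ :=
  (1 - ε) / (1 + ε) * max (fplus x e) (fminus x e)

theorem one_add_mul_inducedMatching (hε : 0 < ε) (e : E) :
    (1 + ε) * inducedMatching ε x e = (1 - ε) * max (fplus x e) (fminus x e) := by
  rw [inducedMatching]
  field_simp

theorem inducedMatching_nonneg (hx : IsExch x) (hε0 : 0 < ε) (hε1 : ε < 1) (e : E) :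
    0 ≤ inducedMatching ε x e :=
  mul_nonneg (div_nonneg (by linarith) (by linarith)) ((hx.1 _ _).1.trans (le_max_left _ _))

theorem inducedMatching_le_one (hx : IsExch x) (hε : 0 < ε) (e : E) :
    inducedMatching ε x e ≤ 1 := by
  have hmax : max (fplus x e) (fminus x e) ≤ 1 := max_le (hx.1 _ _).2 (hx.1 _ _).2
  have hmax0 : 0 ≤ max (fplus x e) (fminus x e) := (hx.1 _ _).1.trans (le_max_left _ _)
  have := one_add_mul_inducedMatching (x := x) hε e
  nlinarith

theorem one_sub_mul_sum_fminus_le {s : Finset E} (hε0 : 0 < ε) (hε1 : ε < 1) :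
    (1 - ε) * ∑ e ∈ s, fminus x e ≤ (1 + ε) * ∑ e ∈ s, inducedMatching ε x e := by
  rw [mul_sum, mul_sum]
  refine sum_le_sum fun e _ => ?_
  rw [one_add_mul_inducedMatching hε0]
  exact mul_le_mul_of_nonneg_left (le_max_right _ _) (by linarith)

theorem one_add_mul_inducedMatching_le_fplus (hx : IsExch x) (hε0 : 0 < ε) (hε1 : ε < 1)
    (hQ : (1 - ε) * fminus x e ≤ fplus x e) :
    (1 + ε) * inducedMatching ε x e ≤ fplus x e := by
  rw [one_add_mul_inducedMatching hε0, mul_max_of_nonneg _ _ (by linarith)]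
  have : 0 ≤ fplus x e := (hx.1 _ _).1
  exact max_le (by nlinarith) hQ

theorem sum_inducedMatching_le_one {s : Finset E} (hx : IsExch x) (hε0 : 0 < ε) (hε1 : ε < 1)
    (hQ : ∀ e, (1 - ε) * fminus x e ≤ fplus x e) (hs : ∑ e ∈ s, fplus x e ≤ 1 + ε) :
    ∑ e ∈ s, inducedMatching ε x e ≤ 1 := by
  refine le_of_mul_le_mul_left ?_ (by linarith : 0 < 1 + ε)
  calc (1 + ε) * ∑ e ∈ s, inducedMatching ε x e
      = ∑ e ∈ s, (1 + ε) * inducedMatching ε x e := mul_sum _ _ _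
    _ ≤ ∑ e ∈ s, fplus x e :=
      sum_le_sum fun e _ => one_add_mul_inducedMatching_le_fplus hx hε0 hε1 (hQ e)
    _ ≤ (1 + ε) * 1 := by rw [mul_one]; exact hs

variable [Fintype E]

theorem util_zero (α : Agent V E) : util ε d H Γ ends rank (fun _ _ => 0) α = 0 := by
  rcases α with e | e | v <;> simp [util, uEdge, uInter, uVert]

theorem CoreStable.util_nonneg (h : CoreStable (util ε d H Γ ends rank) x) (α : Agent V E) :
    0 ≤ util ε d H Γ ends rank x α :=
  (util_zero α).symm.trans_le (h.util_zero_le α)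

theorem mem_Ev {v : V} {e : E} : e ∈ Ev ends v ↔ ∃ t, ends e t = v := by
  simp [Ev]

theorem Symm.inter_vert (hx : Symm ends x) {v : V} {e : E} (he : e ∈ Ev ends v) :
    x (interA e) (vertA v) = fminus x e := by
  obtain ⟨t, rfl⟩ := mem_Ev.mp he
  exact (hx e).1 t

theorem Symm.vert_inter (hx : Symm ends x) {v : V} {e : E} (he : e ∈ Ev ends v) :
    x (vertA v) (interA e) = fplus x e := by
  obtain ⟨t, rfl⟩ := mem_Ev.mp he
  exact (hx e).2 t

theorem Symm.uVert_eq (hx : Symm ends x) (v : V) :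
    uVert d H Γ ends rank x v = ∑ e ∈ Ev ends v, weight d H rank v e * fminus x e
      - Γ * max (∑ e ∈ Ev ends v, fplus x e - 1) 0 := by
  rw [uVert, sum_congr rfl fun e he => by rw [hx.inter_vert he],
    sum_congr rfl fun e he => hx.vert_inter he]

theorem CoreStable.one_sub_mul_fplus_le_fminus (h : CoreStable (util ε d H Γ ends rank) x)
    (e : E) : (1 - ε) * fplus x e ≤ fminus x e := by
  have : 0 ≤ uEdge ε x e := h.util_nonneg (edgeA e)
  exact sub_nonneg.mp this

theorem CoreStable.one_sub_mul_fminus_le_fplus (h : CoreStable (util ε d H Γ ends rank) x)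
    (hx : Symm ends x) (e : E) : (1 - ε) * fminus x e ≤ fplus x e := by
  have : 0 ≤ uInter ε ends x e := h.util_nonneg (interA e)
  rw [hx.uInter_eq] at this
  exact sub_nonneg.mp this

theorem CoreStable.sum_fplus_le (h : CoreStable (util ε d H Γ ends rank) x) (hx : IsExch x)
    (hsymm : Symm ends x) (hε : 0 < ε) (hd : 0 ≤ d) (hH : 0 ≤ H) (hΓ : Γ = 3 * (d + H + 1) / ε)
    {v : V} (hdeg : (Ev ends v).card ≤ 3) : ∑ e ∈ Ev ends v, fplus x e ≤ 1 + ε := by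
  have hpay : ∑ e ∈ Ev ends v, weight d H rank v e * fminus x e ≤ 3 * (d + H + 1) :=
    calc ∑ e ∈ Ev ends v, weight d H rank v e * fminus x e
        ≤ ∑ _e ∈ Ev ends v, (d + H + 1) := sum_le_sum fun e _ =>
          (mul_le_of_le_one_right (weight_nonneg hd hH v e) (hx.1 _ _).2).trans (weight_le hd v e)
      _ = (Ev ends v).card * (d + H + 1) := by rw [sum_const, nsmul_eq_mul]
      _ ≤ 3 * (d + H + 1) := by gcongr; exact_mod_cast hdeg
  have hΓε : Γ * ε = 3 * (d + H + 1) := by rw [hΓ]; field_simp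
  have hIR : 0 ≤ uVert d H Γ ends rank x v := h.util_nonneg (vertA v)
  rw [hsymm.uVert_eq] at hIR
  by_contra! hgt
  have : Γ * ε < Γ * max (∑ e ∈ Ev ends v, fplus x e - 1) 0 :=
    mul_lt_mul_of_pos_left (lt_max_of_lt_left (by linarith)) (by rw [hΓ]; positivity)
  linarith

end Instance

section RankWeight

/-- `rankWeight d H 3 = 0`: nothing lies below the least preferred hyperedge. -/
def rankWeight (d H : ℝ) : ℕ → ℝ
  | 0 => d + H + 1
  | 1 => d + H
  | 2 => H
  | _ => 0

variable {d H q : ℝ}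

theorem weight_eq_rankWeight {V E : Type*} (rank : V → E → Fin 3) (v : V) (e : E) :
    weight d H rank v e = rankWeight d H (rank v e) := by
  unfold weight
  generalize rank v e = r
  fin_cases r <;> rfl

theorem rankWeight_antitone (hd : 0 ≤ d) (hH : 0 ≤ H) : Antitone (rankWeight d H) := by
  refine antitone_nat_of_succ_le fun n => ?_
  rcases n with _ | _ | _ | n <;> simp only [rankWeight] <;> linarith

theorem rankWeight_nonneg (hd : 0 ≤ d) (hH : 0 ≤ H) (k : ℕ) : 0 ≤ rankWeight d H k := by
  rcases k with _ | _ | _ | k <;> simp only [rankWeight] <;> linarith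

theorem rankWeight_le (hd : 0 ≤ d) (hH : 0 ≤ H) (k : ℕ) : rankWeight d H k ≤ d + H + 1 :=
  rankWeight_antitone hd hH (Nat.zero_le k)

theorem rankWeight_gap (hq : 0 < q) (hd : d * q = 1) (hH : H * q ^ 2 = 1) {k : ℕ} (hk : k ≤ 2) :
    d + H + 1 - rankWeight d H k + 10 * q ≤ 10 * q * (d + H + 1 - rankWeight d H (k + 1)) := by
  have hqH : q * H = d := by linear_combination (-q * H) * hd + d * hH
  interval_cases k <;> simp only [rankWeight] <;> nlinarith

/-- With `ε = q⁴`, the exchange-rate loss `ε` and the cut `q³` in the offer `1 - q³` together cost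
less than the stability deficit `10 q`. -/
theorem one_add_pow_four_mul_sub_le (hq0 : 0 < q) (hq : q < 1 / 10) (hd : d * q = 1)
    (hH : H * q ^ 2 = 1) {w : ℝ} (hw : w ≤ d + H + 1) :
    (1 + q ^ 4) * (w - 10 * q) ≤ (1 - q ^ 4) * (w * (1 - q ^ 3)) := by
  have hwq : w * q ^ 3 ≤ q + q ^ 2 + q ^ 3 :=
    calc w * q ^ 3 ≤ (d + H + 1) * q ^ 3 := by gcongr
      _ = q + q ^ 2 + q ^ 3 := by linear_combination q ^ 2 * hd + q * hH
  have hfac : 0 ≤ 1 + 2 * q - q ^ 4 := by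
    nlinarith [pow_le_one₀ hq0.le (by linarith : q ≤ 1) (n := 4)]
  nlinarith [mul_le_mul_of_nonneg_right hwq hfac, pow_pos hq0 2, pow_pos hq0 3, pow_pos hq0 4]

theorem rankWeight_split_lt (hq0 : 0 < q) (hq : q < 1 / 10) (hd : d * q = 1) (hH : H * q ^ 2 = 1)
    {k : ℕ} (hk : k ≤ 2) {S T : ℝ} (hbetter : (1 - q ^ 4) * S < (1 + q ^ 4) * (1 - 10 * q))
    (htotal : (1 - q ^ 4) * (S + T) ≤ 1 + q ^ 4) :
    (d + H + 1) * S + rankWeight d H (k + 1) * T < rankWeight d H k * (1 - q ^ 3) := by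
  have hd0 : 0 ≤ d := by nlinarith
  have hH0 : 0 ≤ H := by nlinarith
  have hq4 : 0 < 1 - q ^ 4 := by nlinarith [pow_le_one₀ hq0.le (by linarith : q ≤ 1) (n := 3)]
  have hw' : rankWeight d H (k + 1) ≤ d + H := rankWeight_antitone hd0 hH0 (by omega : 1 ≤ k + 1)
  have hw'0 := rankWeight_nonneg hd0 hH0 (k + 1)
  have hgap := rankWeight_gap hq0 hd hH hk
  refine lt_of_mul_lt_mul_left ?_ hq4.le
  calc (1 - q ^ 4) * ((d + H + 1) * S + rankWeight d H (k + 1) * T)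
      = (d + H + 1 - rankWeight d H (k + 1)) * ((1 - q ^ 4) * S)
        + rankWeight d H (k + 1) * ((1 - q ^ 4) * (S + T)) := by ring
    _ < (d + H + 1 - rankWeight d H (k + 1)) * ((1 + q ^ 4) * (1 - 10 * q))
        + rankWeight d H (k + 1) * (1 + q ^ 4) :=
      add_lt_add_of_lt_of_le (mul_lt_mul_of_pos_left hbetter (by linarith))
        (mul_le_mul_of_nonneg_left htotal hw'0)
    _ = (1 + q ^ 4) * (d + H + 1 - 10 * q * (d + H + 1 - rankWeight d H (k + 1))) := by ring
    _ ≤ (1 + q ^ 4) * (rankWeight d H k - 10 * q) :=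
      mul_le_mul_of_nonneg_left (by linarith) (by positivity)
    _ ≤ (1 - q ^ 4) * (rankWeight d H k * (1 - q ^ 3)) :=
      one_add_pow_four_mul_sub_le hq0 hq hd hH (rankWeight_le hd0 hH0 k)

end RankWeight

theorem exists_share_improving_pair {ε fp fm b : ℝ} (hε0 : 0 < ε) (hε1 : ε < 1) (hfp1 : fp ≤ 1)
    (hP : (1 - ε) * fp ≤ fm) (hQ : (1 - ε) * fm ≤ fp) (hb : fm < b)
    (hb1 : 2 * ε + (1 - ε) * b < 1) :
    ∃ a, 0 ≤ a ∧ a ≤ 1 ∧ fm - (1 - ε) * fp < b - (1 - ε) * a ∧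
      fp - (1 - ε) * fm < a - (1 - ε) * b := by
  have hε2 : 0 < 2 * ε - ε ^ 2 := by nlinarith
  have hPQ : (1 - ε) * ((1 - ε) * fp) ≤ (1 - ε) * fm := mul_le_mul_of_nonneg_left hP (by linarith)
  have hfp0 : 0 ≤ fp := by nlinarith
  have hL1 : fp - (1 - ε) * fm + (1 - ε) * b < 1 := by
    nlinarith [mul_le_mul_of_nonneg_left hfp1 hε2.le]
  -- `(fm - (1-ε) fp) + (1-ε) (fp - (1-ε) fm) = (2ε - ε²) fm`, which is below `(2ε - ε²) b`
  have hLU : fp - (1 - ε) * fm + (1 - ε) * b < (b - (fm - (1 - ε) * fp)) / (1 - ε) := by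
    rw [lt_div_iff₀ (by linarith)]
    nlinarith [mul_lt_mul_of_pos_left hb hε2]
  obtain ⟨a, hLa, haU⟩ := exists_between (lt_min hL1 hLU)
  have haU' := (lt_div_iff₀ (by linarith : 0 < 1 - ε)).mp (haU.trans_le (min_le_right _ _))
  refine ⟨a, by nlinarith, (haU.trans_le (min_le_left _ _)).le, by linarith, by linarith⟩

section Hub

variable {V E : Type*} {ends : E → Fin 3 → V} {e : E} {a b : ℝ}

def spokes (ends : E → Fin 3 → V) (e : E) : Set (Agent V E) :=
  insert (edgeA e) (Set.range fun s => vertA (ends e s))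

def hubExchange (ends : E → Fin 3 → V) (e : E) (a b : ℝ) :
    Agent V E → Agent V E → ℝ := fun p r =>
  if p = interA e ∧ r ∈ spokes ends e then b
  else if r = interA e ∧ p ∈ spokes ends e then a else 0

theorem edgeA_mem_spokes : edgeA e ∈ spokes ends e := Set.mem_insert _ _

theorem vertA_mem_spokes (s : Fin 3) : vertA (ends e s) ∈ spokes ends e :=
  Set.mem_insert_of_mem _ ⟨s, rfl⟩

theorem interA_notMem_spokes : interA e ∉ spokes ends e := by
  simp [spokes, interA, edgeA, vertA]

theorem hubExchange_inter_spoke {p : Agent V E} (hp : p ∈ spokes ends e) :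
    hubExchange ends e a b (interA e) p = b := by
  simp [hubExchange, hp]

theorem hubExchange_spoke_inter {p : Agent V E} (hp : p ∈ spokes ends e) :
    hubExchange ends e a b p (interA e) = a := by
  have hne : p ≠ interA e := ne_of_mem_of_not_mem hp interA_notMem_spokes
  simp [hubExchange, hp, hne]

theorem hubExchange_eq_zero {p r : Agent V E} (hp : p ≠ interA e) (hr : r ≠ interA e) :
    hubExchange ends e a b p r = 0 := by
  simp [hubExchange, hp, hr]

theorem hubExchange_isExchOver (ha0 : 0 ≤ a) (ha1 : a ≤ 1) (hb0 : 0 ≤ b) (hb1 : b ≤ 1) :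
    IsExchOver (insert (interA e) (spokes ends e)) (hubExchange ends e a b) := by
  refine ⟨⟨fun p r => ?_, fun p => ?_⟩, fun p r hpr => ?_⟩
  · unfold hubExchange
    split_ifs <;> exact ⟨by linarith, by linarith⟩
  · by_cases hp : p = interA e
    · simp [hubExchange, hp, interA_notMem_spokes]
    · exact hubExchange_eq_zero hp hp
  · unfold hubExchange
    rw [if_neg, if_neg] <;> rintro ⟨rfl, h⟩ <;> simp_all

theorem uEdge_hubExchange {ε : ℝ} :
    uEdge ε (hubExchange ends e a b) e = b - (1 - ε) * a := by
  rw [uEdge, hubExchange_inter_spoke edgeA_mem_spokes, hubExchange_spoke_inter edgeA_mem_spokes]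

theorem uInter_hubExchange {ε : ℝ} :
    uInter ε ends (hubExchange ends e a b) e = a - (1 - ε) * b := by
  simp only [uInter, hubExchange_inter_spoke edgeA_mem_spokes,
    hubExchange_spoke_inter edgeA_mem_spokes, hubExchange_inter_spoke (vertA_mem_spokes _),
    hubExchange_spoke_inter (vertA_mem_spokes _), min_self, max_self]

variable [Fintype E]

theorem uVert_hubExchange {d H Γ : ℝ} {rank : V → E → Fin 3} (ha1 : a ≤ 1) (s : Fin 3) :
    uVert d H Γ ends rank (hubExchange ends e a b) (ends e s) =
      weight d H rank (ends e s) e * b := by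
  have he : e ∈ Ev ends (ends e s) := mem_Ev.mpr ⟨s, rfl⟩
  have hne : ∀ e' ≠ e, interA e' ≠ (interA e : Agent V E) := fun e' h h' =>
    h (by simpa [interA] using h')
  have hv : vertA (ends e s) ≠ (interA e : Agent V E) := by simp [vertA, interA]
  rw [uVert,
    sum_eq_single_of_mem e he fun e' _ h => by rw [hubExchange_eq_zero (hne e' h) hv, mul_zero],
    sum_eq_single_of_mem e he fun e' _ h => hubExchange_eq_zero hv (hne e' h),
    hubExchange_inter_spoke (vertA_mem_spokes s), hubExchange_spoke_inter (vertA_mem_spokes s),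
    max_eq_right (by linarith), mul_zero, sub_zero]

theorem not_coreStable_of_hubExchange {ε d H Γ : ℝ} {rank : V → E → Fin 3}
    {x : Agent V E → Agent V E → ℝ} (ha0 : 0 ≤ a) (ha1 : a ≤ 1) (hb0 : 0 ≤ b) (hb1 : b ≤ 1)
    (hedge : uEdge ε x e < b - (1 - ε) * a) (hinter : uInter ε ends x e < a - (1 - ε) * b)
    (hvert : ∀ s, uVert d H Γ ends rank x (ends e s) < weight d H rank (ends e s) e * b) :
    ¬ CoreStable (util ε d H Γ ends rank) x := fun h => by
  refine h ⟨insert (interA e) (spokes ends e), hubExchange ends e a b, Set.insert_nonempty _ _,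
    hubExchange_isExchOver ha0 ha1 hb0 hb1, ?_⟩
  rintro _ (rfl | rfl | ⟨s, rfl⟩)
  · show uInter ε ends x e < uInter ε ends (hubExchange ends e a b) e
    rwa [uInter_hubExchange]
  · show uEdge ε x e < uEdge ε (hubExchange ends e a b) e
    rwa [uEdge_hubExchange]
  · show uVert d H Γ ends rank x (ends e s) <
      uVert d H Γ ends rank (hubExchange ends e a b) (ends e s)
    rw [uVert_hubExchange ha1]
    exact hvert s

end Hub

section Stability

variable {V E : Type*} [Fintype E] {ends : E → Fin 3 → V} {rank : V → E → Fin 3}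
  {x : Agent V E → Agent V E → ℝ} {d H Γ q : ℝ}

theorem sum_weight_mul_le_split (hd : 0 ≤ d) (hH : 0 ≤ H) {v : V} {e : E} {g : E → ℝ}
    (hg : ∀ e, 0 ≤ g e)
    (hrank : ∀ e ∈ Ev ends v, ∀ e' ∈ Ev ends v, rank v e = rank v e' → e = e')
    (he : e ∈ Ev ends v) :
    ∑ e' ∈ Ev ends v, weight d H rank v e' * g e' ≤
      (d + H + 1) * ∑ e' ∈ (Ev ends v).filter (fun e' => e' = e ∨ rank v e' < rank v e), g e' +
      rankWeight d H ((rank v e : ℕ) + 1) *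
        ∑ e' ∈ (Ev ends v).filter (fun e' => ¬(e' = e ∨ rank v e' < rank v e)), g e' := by
  rw [← sum_filter_add_sum_filter_not (Ev ends v) (fun e' => e' = e ∨ rank v e' < rank v e),
    mul_sum, mul_sum]
  gcongr with e' he' e' he'
  · exact hg e'
  · exact weight_le hd v e'
  · exact hg e'
  · rw [mem_filter, not_or, not_lt] at he'
    have hne : rank v e ≠ rank v e' := fun h => he'.2.1 (hrank e' he'.1 e he h.symm)
    rw [weight_eq_rankWeight]
    exact rankWeight_antitone hd hH (Fin.lt_def.mp (lt_of_le_of_ne he'.2.2 hne))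

theorem CoreStable.uVert_lt_of_unstable (h : CoreStable (util (q ^ 4) d H Γ ends rank) x)
    (hx : IsExch x) (hsymm : Symm ends x) (hq0 : 0 < q) (hq : q < 1 / 10) (hd : d * q = 1)
    (hH : H * q ^ 2 = 1) (hΓ : Γ = 3 * (d + H + 1) / q ^ 4) {v : V} (hdeg : (Ev ends v).card ≤ 3)
    (hrank : ∀ e ∈ Ev ends v, ∀ e' ∈ Ev ends v, rank v e = rank v e' → e = e')
    {e : E} (he : e ∈ Ev ends v)
    (hbetter : (1 - q ^ 4) * ∑ e' ∈ (Ev ends v).filter (fun e' => e' = e ∨ rank v e' < rank v e),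
      fminus x e' < (1 + q ^ 4) * (1 - 10 * q)) :
    uVert d H Γ ends rank x v < weight d H rank v e * (1 - q ^ 3) := by
  have hd0 : 0 ≤ d := by nlinarith
  have hH0 : 0 ≤ H := by nlinarith
  have htotal : (1 - q ^ 4) *
      (∑ e' ∈ (Ev ends v).filter (fun e' => e' = e ∨ rank v e' < rank v e), fminus x e' +
        ∑ e' ∈ (Ev ends v).filter (fun e' => ¬(e' = e ∨ rank v e' < rank v e)), fminus x e')
      ≤ 1 + q ^ 4 := by
    rw [sum_filter_add_sum_filter_not, mul_sum]
    exact (sum_le_sum fun e' _ => h.one_sub_mul_fminus_le_fplus hsymm e').trans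
      (h.sum_fplus_le hx hsymm (by positivity) hd0 hH0 hΓ hdeg)
  have hcost : 0 ≤ Γ * max (∑ e' ∈ Ev ends v, fplus x e' - 1) 0 :=
    mul_nonneg (by rw [hΓ]; positivity) (le_max_right _ _)
  calc uVert d H Γ ends rank x v ≤ ∑ e' ∈ Ev ends v, weight d H rank v e' * fminus x e' := by
        rw [hsymm.uVert_eq]; linarith
    _ ≤ _ := sum_weight_mul_le_split hd0 hH0 (fun _ => (hx.1 _ _).1) hrank he
    _ < weight d H rank v e * (1 - q ^ 3) := by
        rw [weight_eq_rankWeight]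
        exact rankWeight_split_lt hq0 hq hd hH (Nat.le_of_lt_succ (rank v e).isLt) hbetter htotal

theorem CoreStable.exists_stable_vertex (h : CoreStable (util (q ^ 4) d H Γ ends rank) x)
    (hx : IsExch x) (hsymm : Symm ends x) (hdeg : ∀ v, (Ev ends v).card ≤ 3)
    (hrank : ∀ v, ∀ e ∈ Ev ends v, ∀ e' ∈ Ev ends v, rank v e = rank v e' → e = e')
    (hq0 : 0 < q) (hq4 : q ^ 4 < 1) (hd : d * q = 1) (hH : H * q ^ 2 = 1)
    (hΓ : Γ = 3 * (d + H + 1) / q ^ 4) (e : E) : ∃ t : Fin 3, 1 - 10 * q ≤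
      ∑ e' ∈ (Ev ends (ends e t)).filter
        (fun e' => e' = e ∨ rank (ends e t) e' < rank (ends e t) e),
          inducedMatching (q ^ 4) x e' := by
  by_cases hq : 1 / 10 ≤ q
  · exact ⟨0, (by linarith : 1 - 10 * q ≤ 0).trans
      (sum_nonneg fun e' _ => inducedMatching_nonneg hx (by positivity) hq4 e')⟩
  push Not at hq
  by_contra! hunstable
  have hbetter : ∀ t, (1 - q ^ 4) * ∑ e' ∈ (Ev ends (ends e t)).filter
      (fun e' => e' = e ∨ rank (ends e t) e' < rank (ends e t) e), fminus x e' <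
        (1 + q ^ 4) * (1 - 10 * q) := fun t =>
    (one_sub_mul_sum_fminus_le (by positivity) hq4).trans_lt
      (mul_lt_mul_of_pos_left (hunstable t) (by positivity))
  have he : ∀ t, e ∈ Ev ends (ends e t) := fun t => mem_Ev.mpr ⟨t, rfl⟩
  have hq3 : 0 < q ^ 3 := by positivity
  have hq3' : q ^ 3 < 1 := pow_lt_one₀ hq0.le (by linarith) (by norm_num)
  have hfm : fminus x e < 1 - q ^ 3 := by
    have hmem : e ∈ (Ev ends (ends e 0)).filter
        (fun e' => e' = e ∨ rank (ends e 0) e' < rank (ends e 0) e) :=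
      mem_filter.mpr ⟨he 0, Or.inl rfl⟩
    have hS : fminus x e ≤ _ := single_le_sum (f := fminus x) (fun e' _ => (hx.1 _ _).1) hmem
    have hmargin := one_add_pow_four_mul_sub_le hq0 hq hd hH (w := 1) (by nlinarith)
    refine lt_of_mul_lt_mul_left ?_ (sub_nonneg.mpr hq4.le)
    nlinarith [hbetter 0, mul_le_mul_of_nonneg_left hS (sub_nonneg.mpr hq4.le)]
  obtain ⟨a, ha0, ha1, hedge, hinter⟩ := exists_share_improving_pair (by positivity) hq4
    (hx.1 _ _).2 (h.one_sub_mul_fplus_le_fminus e) (h.one_sub_mul_fminus_le_fplus hsymm e) hfm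
    (by nlinarith [mul_pos hq3 (by nlinarith : 0 < 1 - q - q ^ 4)])
  refine not_coreStable_of_hubExchange ha0 ha1 (by linarith) (by linarith) hedge ?_ ?_ h
  · rwa [hsymm.uInter_eq]
  · exact fun t =>
      h.uVert_lt_of_unstable hx hsymm hq0 hq hd hH hΓ (hdeg _) (hrank _) (he t) (hbetter t)

end Stability

theorem core_stable_gives_stable_matching_general
    (V E : Type*) [Fintype E]
    (ends : E → Fin 3 → V)
    (hdeg : ∀ v, (Ev ends v).card ≤ 3)
    (rank : V → E → Fin 3)
    (hrank_inj : ∀ v, ∀ e ∈ Ev ends v, ∀ e' ∈ Ev ends v, rank v e = rank v e' → e = e')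
    (ε d H Γ : ℝ) (hε0 : 0 < ε) (hε1 : ε < 1/1000)
    (hd : d = ε ^ (-(1:ℝ)/4)) (hH : H = ε ^ (-(1:ℝ)/2)) (hΓ : Γ = 3*(d+H+1)/ε)
    (x : Agent V E → Agent V E → ℝ) (hx : IsExch x) (hsymm : Symm ends x)
    (hcs : CoreStable (util ε d H Γ ends rank) x)
    (f : E → ℝ) (hf : ∀ e, f e = (1 - ε) / (1 + ε) * max (fplus x e) (fminus x e)) :
    (∀ e, 0 ≤ f e ∧ f e ≤ 1) ∧
    (∀ v : V, (∑ e ∈ Ev ends v, f e) ≤ 1) ∧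
    (∀ e : E, ∃ t : Fin 3,
      (1 : ℝ) - 10 * ε ^ ((1:ℝ)/4) ≤
        ∑ e' ∈ (Ev ends (ends e t)).filter
          (fun e' => e' = e ∨ rank (ends e t) e' < rank (ends e t) e), f e') := by
  obtain rfl : f = inducedMatching ε x := funext hf
  have hε1' : ε < 1 := by linarith
  have hd0 : 0 ≤ d := hd ▸ by positivity
  have hH0 : 0 ≤ H := hH ▸ by positivity
  refine ⟨fun e => ⟨inducedMatching_nonneg hx hε0 hε1' e, inducedMatching_le_one hx hε0 e⟩,
    fun v => sum_inducedMatching_le_one hx hε0 hε1' (hcs.one_sub_mul_fminus_le_fplus hsymm)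
      (hcs.sum_fplus_le hx hsymm hε0 hd0 hH0 hΓ (hdeg v)), fun e => ?_⟩
  have hq0 : 0 < ε ^ ((1:ℝ)/4) := by positivity
  have hq4 : (ε ^ ((1:ℝ)/4)) ^ 4 = ε := by
    rw [← Real.rpow_natCast, ← Real.rpow_mul hε0.le]; norm_num
  have hdq : d * ε ^ ((1:ℝ)/4) = 1 := by
    rw [hd, ← Real.rpow_add hε0]; norm_num
  have hHq : H * (ε ^ ((1:ℝ)/4)) ^ 2 = 1 := by
    rw [hH, ← Real.rpow_natCast, ← Real.rpow_mul hε0.le, ← Real.rpow_add hε0]; norm_num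
  generalize ε ^ ((1:ℝ)/4) = q at *
  subst hq4
  exact hcs.exists_stable_vertex hx hsymm hdeg hrank_inj hq0 hε1' hdq hHq hΓ e

/-- In `D(G,≻,ε)`, if `x` is a symmetric core-stable data exchange, then
`f(e) = ((1-ε)/(1+ε))·max(f⁺(e), f⁻(e))` is a fractional matching of `G` and it is
`(1 - 10·ε^{1/4})`-stable: for every hyperedge `e` some vertex `v` of `e` has
`Σ_{e' ∈ E(v), e' = e or e' ≻_v e} f(e') ≥ 1 - 10·ε^{1/4}`. -/
theorem core_stable_gives_stable_matching
    (V E : Type*) [Fintype V] [Fintype E]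
    (ends : E → Fin 3 → V) (hends : ∀ e, Function.Injective (ends e))
    (hdeg : ∀ v, (Ev ends v).card ≤ 3)
    (rank : V → E → Fin 3)
    (hrank_inj : ∀ v, ∀ e ∈ Ev ends v, ∀ e' ∈ Ev ends v, rank v e = rank v e' → e = e')
    (hrank_seg : ∀ v, ∀ e ∈ Ev ends v, (rank v e : ℕ) < (Ev ends v).card)
    (ε d H Γ : ℝ) (hε0 : 0 < ε) (hε1 : ε < 1/1000)
    (hd : d = ε ^ (-(1:ℝ)/4)) (hH : H = ε ^ (-(1:ℝ)/2)) (hΓ : Γ = 3*(d+H+1)/ε)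
    (x : Agent V E → Agent V E → ℝ) (hx : IsExch x) (hsymm : Symm ends x)
    (hcs : CoreStable (util ε d H Γ ends rank) x)
    (f : E → ℝ) (hf : ∀ e, f e = (1 - ε) / (1 + ε) * max (fplus x e) (fminus x e)) :
    (∀ e, 0 ≤ f e ∧ f e ≤ 1) ∧
    (∀ v : V, (∑ e ∈ Ev ends v, f e) ≤ 1) ∧
    (∀ e : E, ∃ t : Fin 3,
      (1 : ℝ) - 10 * ε ^ ((1:ℝ)/4) ≤
        ∑ e' ∈ (Ev ends (ends e t)).filter
          (fun e' => e' = e ∨ rank (ends e t) e' < rank (ends e t) e), f e') :=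
  core_stable_gives_stable_matching_general V E ends hdeg rank hrank_inj ε d H Γ hε0 hε1 hd hH hΓ x
    hx hsymm hcs f hf

end
end DataExchangeHGM
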